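/- Total parity of a Majorana dimer state: let M be a perfect matching of {1,…,2L} with parities p, and let ψ ∈ H_L be a nonzero vector satisfying (γ_j + i p_{j,k} γ_k)ψ = 0 for every pair (j,k) ∈ M with j < k. Then ψ is an eigenvector of the total parity operator P with eigenvalue (−1)^{N_c(M)} · ∏_{(j,k)∈M} p_{j,k}, where N_c(M) is the number of crossing pairs of M. -/

import Mathlib

/-!
Since `γ_{2a-1} γ_{2a} = i Z_a`, the ordered product `γ_1 γ_2 ⋯ γ_{2L}` equals `i^L P`. Reorder it
so that the two Majoranas of each pair of `M` become adjacent: peel off the pair `(j, k)` containing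
the smallest index and move `γ_k` left past the indices strictly between `j` and `k`, one sign per
index. A pair lying entirely between `j` and `k` contributes two such indices, so the sign is
`(-1)` to the number of pairs crossing `(j, k)`. On `ψ` each adjacent product acts as the scalar
`γ_j γ_k ψ = i p_{j,k} ψ` (from the dimer condition and `γ_j² = 1`); hence
`i^L P ψ = (-1)^{N_c(M)} ∏ (i p_{j,k}) ψ`, and `|M| = L`.
-/

open Complex Matrix

noncomputable section

/-- Computational basis labels for `L` qubits: bit strings `b : Fin L → Fin 2`. -/
abbrev QBasis (L : ℕ) := Fin L → Fin 2

/-- State vectors of `L` qubits (the Hilbert space `H_L = (ℂ²)^{⊗L}`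
in its computational basis coordinates). -/
abbrev QVec (L : ℕ) := QBasis L → ℂ

/-- Operators on `L` qubits, written as matrices in the computational basis. -/
abbrev QOp (L : ℕ) := Matrix (QBasis L) (QBasis L) ℂ

/-- The inner product `⟨φ, ψ⟩`, conjugate-linear in the first argument. -/
def qInner {L : ℕ} (φ ψ : QVec L) : ℂ := ∑ b, (starRingEnd ℂ) (φ b) * ψ b

/-- `+1` for bit `0`, `-1` for bit `1`. -/
def bitSign (x : Fin 2) : ℂ := if x = 0 then 1 else -1

/-- Flip the `k`-th bit of a bit string. -/
def flipBit {L : ℕ} (k : Fin L) (b : QBasis L) : QBasis L :=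
  Function.update b k (1 - b k)

/-- Pauli `X` on the (1-based) site `k`; the identity if `k` is out of range. -/
def siteX (L : ℕ) (k : ℕ) : QOp L :=
  if h : 1 ≤ k ∧ k ≤ L then
    Matrix.of fun b c => if c = flipBit ⟨k - 1, by omega⟩ b then 1 else 0
  else 1

/-- Pauli `Y` on the (1-based) site `k`; the identity if `k` is out of range. -/
def siteY (L : ℕ) (k : ℕ) : QOp L :=
  if h : 1 ≤ k ∧ k ≤ L then
    Matrix.of fun b c =>
      if c = flipBit ⟨k - 1, by omega⟩ b then -Complex.I * bitSign (b ⟨k - 1, by omega⟩)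
      else 0
  else 1

/-- Pauli `Z` on the (1-based) site `k`; the identity if `k` is out of range. -/
def siteZ (L : ℕ) (k : ℕ) : QOp L :=
  if h : 1 ≤ k ∧ k ≤ L then
    Matrix.diagonal fun b => bitSign (b ⟨k - 1, by omega⟩)
  else 1

/-- The ordered operator product `f 1 * f 2 * ⋯ * f n`. -/
def opProd (L : ℕ) (f : ℕ → QOp L) (n : ℕ) : QOp L :=
  ((List.range n).map fun i => f (i + 1)).prod

/-- The Jordan–Wigner Majorana operator `γ_m` (1-based, `1 ≤ m ≤ 2L`):
`γ_{2k-1} = Z_1 ⋯ Z_{k-1} X_k` and `γ_{2k} = Z_1 ⋯ Z_{k-1} Y_k`. -/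
def majorana (L : ℕ) (m : ℕ) : QOp L :=
  opProd L (siteZ L) ((m + 1) / 2 - 1) *
    (if m % 2 = 1 then siteX L ((m + 1) / 2) else siteY L ((m + 1) / 2))

/-- The total parity operator `P = Z_1 Z_2 ⋯ Z_L`. -/
def totalParity (L : ℕ) : QOp L := opProd L (siteZ L) L


/-- `M` is a perfect matching of `{1, …, 2L}`: a finite set of pairs `(j,k)` with
`1 ≤ j < k ≤ 2L` such that every element of `{1, …, 2L}` lies in exactly one pair. -/
def IsMatching (L : ℕ) (M : Finset (ℕ × ℕ)) : Prop :=
  (∀ pr ∈ M, pr.1 < pr.2 ∧ 1 ≤ pr.1 ∧ pr.2 ≤ 2 * L) ∧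
  (∀ m : ℕ, 1 ≤ m → m ≤ 2 * L → ∃! pr : ℕ × ℕ, pr ∈ M ∧ (pr.1 = m ∨ pr.2 = m))

/-- The joint solution space of the dimer conditions
`(γ_j + i p_{j,k} γ_k) ψ = 0` for all pairs `(j,k) ∈ M`. -/
def dimerSpace (L : ℕ) (M : Finset (ℕ × ℕ)) (p : ℕ × ℕ → ℂ) : Submodule ℂ (QVec L) :=
  ⨅ pr ∈ M, LinearMap.ker
    (majorana L pr.1 + (Complex.I * p pr) • majorana L pr.2).mulVecLin
/-- The number of crossing pairs of a matching `M`: pairs `(a,b)` and `(c,d)` of `M`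
(written with `a < b`, `c < d`) cross if `a < c < b < d` or `c < a < d < b`; each
crossing is counted once (via the ordering `a < c`). -/
def crossings (M : Finset (ℕ × ℕ)) : ℕ :=
  ((M ×ˢ M).filter fun x => x.1.1 < x.2.1 ∧ x.2.1 < x.1.2 ∧ x.1.2 < x.2.2).card

theorem List.prod_mul_eq_neg_one_pow_mul {R : Type*} [Ring R] {x : R} {l : List R}
    (h : ∀ a ∈ l, a * x = -(x * a)) : l.prod * x = (-1) ^ l.length * (x * l.prod) := by
  induction l with
  | nil => simp
  | cons a l ih =>
    rw [List.prod_cons, mul_assoc, ih fun b hb => h b (List.mem_cons_of_mem a hb), ← mul_assoc a,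
      ((Commute.neg_one_right a).pow_right _).eq, mul_assoc, ← mul_assoc a,
      h a List.mem_cons_self, List.length_cons, pow_succ]
    noncomm_ring

theorem List.prod_map_cons_append_cons {R : Type*} [Ring R] (γ : ℕ → R) {x y : ℕ}
    {A B : List ℕ} (hA : ∀ a ∈ A, γ a * γ y = -(γ y * γ a)) :
    ((x :: (A ++ y :: B)).map γ).prod =
      (-1) ^ A.length * (γ x * γ y) * ((A ++ B).map γ).prod := by
  have hpull := List.prod_mul_eq_neg_one_pow_mul (l := A.map γ) (x := γ y) (by simpa using hA)
  simp only [List.map_cons, List.map_append, List.prod_cons, List.prod_append, List.length_map]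
    at hpull ⊢
  rw [← mul_assoc _ (γ y), hpull]
  simp only [mul_assoc, ((Commute.neg_one_right (γ x)).pow_right A.length).left_comm]

theorem List.length_eq_card_filter_lt {A B : List ℕ} {y : ℕ}
    (h : (A ++ y :: B).Pairwise (· < ·)) :
    A.length = ((A ++ B).toFinset.filter (· < y)).card := by
  obtain ⟨hA, hyB, hAyB⟩ := List.pairwise_append.mp h
  have hB : ∀ b ∈ B, y < b := (List.pairwise_cons.mp hyB).1
  rw [← List.toFinset_card_of_nodup hA.nodup]
  congr 1
  ext e
  simp only [List.mem_toFinset, Finset.mem_filter, List.mem_append]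
  constructor
  · intro he; exact ⟨Or.inl he, hAyB e he y List.mem_cons_self⟩
  · rintro ⟨he | he, hlt⟩
    · exact he
    · exact absurd (hB e he) hlt.asymm

theorem Matrix.mul_mulVec_eq_smul_of_add_smul_mulVec_eq_zero {ι R : Type*} [Fintype ι]
    [DecidableEq ι] [CommRing R] {A B : Matrix ι ι R} {z : R} {ψ : ι → R}
    (hA : A * A = 1) (hz : z * z = -1) (h : (A + z • B) *ᵥ ψ = 0) :
    (A * B) *ᵥ ψ = z • ψ := by
  have h1 : ψ + z • ((A * B) *ᵥ ψ) = 0 := by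
    simpa only [Matrix.add_mulVec, Matrix.smul_mulVec, Matrix.mulVec_add, Matrix.mulVec_smul,
      Matrix.mulVec_mulVec, hA, Matrix.one_mulVec, Matrix.mulVec_zero] using congrArg (A *ᵥ ·) h
  have h2 := congrArg (z • ·) h1
  simp only [smul_add, smul_smul, hz, neg_smul, one_smul, smul_zero] at h2
  exact (add_neg_eq_zero.mp h2).symm

def pairSet (pr : ℕ × ℕ) : Finset ℕ := {pr.1, pr.2}

def endpoints (M : Finset (ℕ × ℕ)) : Finset ℕ := M.biUnion pairSet

structure IsPartialMatching (M : Finset (ℕ × ℕ)) : Prop where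
  fst_lt_snd : ∀ pr ∈ M, pr.1 < pr.2
  pairwiseDisjoint : (M : Set (ℕ × ℕ)).PairwiseDisjoint pairSet

lemma mem_endpoints {M : Finset (ℕ × ℕ)} {e : ℕ} :
    e ∈ endpoints M ↔ ∃ pr ∈ M, pr.1 = e ∨ pr.2 = e := by
  simp [endpoints, pairSet, eq_comm]

lemma crossings_insert {pr : ℕ × ℕ} {M : Finset (ℕ × ℕ)} (h : pr ∉ M)
    (hmin : ∀ y ∈ M, pr.1 < y.1) :
    crossings (insert pr M) =
      crossings M + (M.filter fun y => y.1 < pr.2 ∧ pr.2 < y.2).card := by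
  simp only [crossings, Finset.card_filter, Finset.sum_product, Finset.sum_insert h]
  have hfirst : ∀ y ∈ M, ¬(y.1 < pr.1 ∧ pr.1 < y.2 ∧ y.2 < pr.2) := fun y hy h' =>
    (hmin y hy).not_gt h'.1
  have hpr : ∀ y ∈ M,
      (pr.1 < y.1 ∧ y.1 < pr.2 ∧ pr.2 < y.2) ↔ (y.1 < pr.2 ∧ pr.2 < y.2) :=
    fun y hy => and_iff_right (hmin y hy)
  rw [Finset.sum_add_distrib, Finset.sum_eq_zero fun y hy => if_neg (hfirst y hy),
    Finset.sum_congr rfl fun y hy => if_congr (hpr y hy) rfl rfl, if_neg (by omega)]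
  ring

namespace IsPartialMatching

variable {M : Finset (ℕ × ℕ)} (hM : IsPartialMatching M)
include hM

lemma mono {N : Finset (ℕ × ℕ)} (h : N ⊆ M) : IsPartialMatching N :=
  ⟨fun pr hpr => hM.fst_lt_snd pr (h hpr), hM.pairwiseDisjoint.subset (by simpa using h)⟩

lemma card_endpoints : (endpoints M).card = 2 * M.card := by
  rw [endpoints, Finset.card_biUnion hM.pairwiseDisjoint, mul_comm, Finset.card_eq_sum_ones,
    Finset.sum_mul]
  refine Finset.sum_congr rfl fun pr hpr => ?_
  simp [pairSet, Finset.card_pair (hM.fst_lt_snd pr hpr).ne]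

lemma endpoints_erase {pr : ℕ × ℕ} (hpr : pr ∈ M) :
    endpoints (M.erase pr) = endpoints M \ pairSet pr := by
  ext e
  simp only [endpoints, Finset.mem_biUnion, Finset.mem_erase, Finset.mem_sdiff]
  constructor
  · rintro ⟨y, ⟨hne, hy⟩, he⟩
    exact ⟨⟨y, hy, he⟩, fun he' =>
      Finset.disjoint_left.mp (hM.pairwiseDisjoint hy hpr hne) he he'⟩
  · rintro ⟨⟨y, hy, he⟩, he'⟩
    exact ⟨y, ⟨by rintro rfl; exact he' he, hy⟩, he⟩

lemma card_filter_endpoints_lt {k : ℕ} (hk : k ∉ endpoints M) :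
    ((endpoints M).filter (· < k)).card =
      2 * (M.filter (·.2 < k)).card + (M.filter fun y => y.1 < k ∧ k < y.2).card := by
  rw [endpoints, Finset.filter_biUnion,
    Finset.card_biUnion (hM.pairwiseDisjoint.mono fun _ => Finset.filter_subset _ _),
    Finset.card_filter, Finset.card_filter, Finset.mul_sum, ← Finset.sum_add_distrib]
  refine Finset.sum_congr rfl fun y hy => ?_
  have hlt := hM.fst_lt_snd y hy
  have hk1 : y.1 ≠ k := fun h => hk (mem_endpoints.mpr ⟨y, hy, Or.inl h⟩)
  have hk2 : y.2 ≠ k := fun h => hk (mem_endpoints.mpr ⟨y, hy, Or.inr h⟩)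
  simp only [pairSet, Finset.filter_insert, Finset.filter_singleton]
  split_ifs <;> first | omega | simp [hlt.ne]

lemma exists_eq_fst_of_sorted {x : ℕ} {t : List ℕ} (hl : (x :: t).Pairwise (· < ·))
    (htf : (x :: t).toFinset = endpoints M) :
    ∃ pr ∈ M, ∃ A B : List ℕ, x = pr.1 ∧ t = A ++ pr.2 :: B := by
  have hmem : ∀ e, e ∈ endpoints M → e = x ∨ x < e := fun e he => by
    rw [← htf, List.mem_toFinset, List.mem_cons] at he
    exact he.imp id ((List.pairwise_cons.mp hl).1 e)
  obtain ⟨pr, hpr, hx⟩ := mem_endpoints.mp (htf ▸ List.mem_toFinset.mpr List.mem_cons_self)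
  have hlt := hM.fst_lt_snd pr hpr
  have h1 := hmem pr.1 (mem_endpoints.mpr ⟨pr, hpr, Or.inl rfl⟩)
  have hx1 : x = pr.1 := by omega
  have h2 : pr.2 ∈ t := by
    have := htf ▸ mem_endpoints.mpr ⟨pr, hpr, Or.inr rfl⟩
    rw [List.mem_toFinset, List.mem_cons] at this
    exact this.resolve_left (by omega)
  obtain ⟨A, B, rfl⟩ := List.append_of_mem h2
  exact ⟨pr, hpr, A, B, hx1, rfl⟩

section FirstPair

variable {pr : ℕ × ℕ} (hpr : pr ∈ M) {A B : List ℕ}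
  (hl : (pr.1 :: (A ++ pr.2 :: B)).Pairwise (· < ·))
  (htf : (pr.1 :: (A ++ pr.2 :: B)).toFinset = endpoints M)
include hpr hl htf

lemma toFinset_eq_endpoints_erase : (A ++ B).toFinset = endpoints (M.erase pr) := by
  have hnd := hl.nodup
  rw [hM.endpoints_erase hpr, ← htf]
  ext e
  simp only [List.nodup_cons, List.mem_append, List.mem_cons, not_or,
    List.nodup_append] at hnd
  simp only [List.mem_toFinset, List.mem_append, List.mem_cons, Finset.mem_sdiff, pairSet,
    Finset.mem_insert, Finset.mem_singleton]
  grind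

lemma neg_one_pow_length_mul_neg_one_pow_crossings_erase {R : Type*} [Monoid R]
    [HasDistribNeg R] :
    (-1 : R) ^ A.length * (-1) ^ crossings (M.erase pr) = (-1) ^ crossings M := by
  have htfN := hM.toFinset_eq_endpoints_erase hpr hl htf
  obtain ⟨hx, hAyB⟩ := List.pairwise_cons.mp hl
  have hmin : ∀ y ∈ M.erase pr, pr.1 < y.1 := fun y hy => by
    have := htfN ▸ mem_endpoints.mpr ⟨y, hy, Or.inl rfl⟩
    rw [List.mem_toFinset, List.mem_append] at this
    exact hx _ (List.mem_append.mpr (this.imp_right (List.mem_cons_of_mem _)))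
  have hk : pr.2 ∉ endpoints (M.erase pr) := by simp [hM.endpoints_erase hpr, pairSet]
  conv_rhs => rw [← Finset.insert_erase hpr, crossings_insert (Finset.notMem_erase _ _) hmin]
  rw [List.length_eq_card_filter_lt hAyB, htfN,
    (hM.mono (M.erase_subset pr)).card_filter_endpoints_lt hk, ← pow_add, add_assoc,
    add_comm _ (crossings _), pow_add, pow_mul, neg_one_sq, one_pow, one_mul]

end FirstPair

end IsPartialMatching

theorem list_prod_mulVec_eq_neg_one_pow_crossings_smul {ι R : Type*} [Fintype ι]
    [DecidableEq ι] [CommRing R] (γ : ℕ → Matrix ι ι R) (c : ℕ × ℕ → R) (ψ : ι → R)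
    {M : Finset (ℕ × ℕ)} (hM : IsPartialMatching M)
    (hanti : ∀ m ∈ endpoints M, ∀ n ∈ endpoints M, m ≠ n → γ m * γ n = -(γ n * γ m))
    (hpair : ∀ pr ∈ M, (γ pr.1 * γ pr.2) *ᵥ ψ = c pr • ψ)
    {l : List ℕ} (hl : l.Pairwise (· < ·)) (htf : l.toFinset = endpoints M) :
    (l.map γ).prod *ᵥ ψ = ((-1) ^ crossings M * ∏ pr ∈ M, c pr) • ψ := by
  induction hn : M.card generalizing M l with
  | zero =>
    obtain rfl := Finset.card_eq_zero.mp hn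
    obtain rfl : l = [] := by simpa [endpoints] using htf
    simp [crossings]
  | succ n ih =>
    obtain ⟨x, t, rfl⟩ : ∃ x t, l = x :: t := by
      refine List.exists_cons_of_ne_nil fun hl0 => ?_
      obtain ⟨pr, hpr⟩ := Finset.card_pos.mp (by omega : 0 < M.card)
      have := htf ▸ mem_endpoints.mpr ⟨pr, hpr, Or.inl rfl⟩
      simp [hl0] at this
    obtain ⟨pr, hpr, A, B, rfl, rfl⟩ := hM.exists_eq_fst_of_sorted hl htf
    have hmem : ∀ e ∈ pr.1 :: (A ++ pr.2 :: B), e ∈ endpoints M := fun e he =>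
      htf ▸ List.mem_toFinset.mpr he
    have hsub : endpoints (M.erase pr) ⊆ endpoints M :=
      hM.endpoints_erase hpr ▸ Finset.sdiff_subset
    have hrec := ih (hM.mono (M.erase_subset pr))
      (fun m hm k hk => hanti m (hsub hm) k (hsub hk))
      (fun q hq => hpair q (Finset.mem_of_mem_erase hq))
      ((List.pairwise_cons.mp hl).2.sublist (by simp)) (hM.toFinset_eq_endpoints_erase hpr hl htf)
      (by rw [Finset.card_erase_of_mem hpr, hn]; rfl)
    have hA : ∀ a ∈ A, γ a * γ pr.2 = -(γ pr.2 * γ a) := fun a ha =>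
      hanti a (hmem a (by simp [ha])) _ (hmem _ (by simp))
        ((List.pairwise_append.mp (List.pairwise_cons.mp hl).2).2.2 a ha _ List.mem_cons_self).ne
    have hsign : (-1 : Matrix ι ι R) ^ A.length = algebraMap R _ ((-1) ^ A.length) := by simp
    rw [List.prod_map_cons_append_cons γ hA, hsign, ← Algebra.smul_def, smul_mul_assoc,
      Matrix.smul_mulVec, ← Matrix.mulVec_mulVec, hrec, Matrix.mulVec_smul, hpair pr hpr,
      smul_smul, smul_smul, ← hM.neg_one_pow_length_mul_neg_one_pow_crossings_erase hpr hl htf,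
      ← Finset.mul_prod_erase M c hpr]
    congr 1
    ring

lemma bitSign_one_sub (x : Fin 2) : bitSign (1 - x) = -bitSign x := by
  fin_cases x <;> simp [bitSign]

def siteOp (L k : ℕ) (flip : Bool) (amp : Fin 2 → ℂ) : QOp L :=
  if h : 1 ≤ k ∧ k ≤ L then
    Matrix.of fun b c =>
      if c = (if flip then flipBit ⟨k - 1, by omega⟩ b else b) then
        amp (b ⟨k - 1, by omega⟩)
      else 0
  else 1

lemma siteOp_of_not_mem {L k : ℕ} (h : ¬(1 ≤ k ∧ k ≤ L)) (s : Bool) (f : Fin 2 → ℂ) :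
    siteOp L k s f = 1 :=
  dif_neg h

lemma siteOp_mul_siteOp (L k : ℕ) (s t : Bool) (f g : Fin 2 → ℂ) :
    siteOp L k s f * siteOp L k t g =
      siteOp L k (xor s t) (fun x => f x * g (if s then 1 - x else x)) := by
  by_cases h : 1 ≤ k ∧ k ≤ L
  · ext b c
    simp only [siteOp, dif_pos h, Matrix.mul_apply, Matrix.of_apply, ite_mul, zero_mul,
      Finset.sum_ite_eq', Finset.mem_univ, if_true]
    cases s <;> cases t <;> simp [flipBit, mul_comm]
  · simp only [siteOp_of_not_mem h, mul_one]

lemma commute_siteOp {L j k : ℕ} (h : j ≠ k) (s t : Bool) (f g : Fin 2 → ℂ) :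
    Commute (siteOp L j s f) (siteOp L k t g) := by
  by_cases hj : 1 ≤ j ∧ j ≤ L
  · by_cases hk : 1 ≤ k ∧ k ≤ L
    · have hne : (⟨j - 1, by omega⟩ : Fin L) ≠ ⟨k - 1, by omega⟩ := by
        simp only [ne_eq, Fin.mk.injEq]; omega
      ext b c
      simp only [siteOp, dif_pos hj, dif_pos hk, Matrix.mul_apply, Matrix.of_apply, ite_mul,
        zero_mul, Finset.sum_ite_eq', Finset.mem_univ, if_true]
      cases s <;> cases t <;>
        simp [flipBit, Function.update_of_ne hne, Function.update_of_ne hne.symm,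
          Function.update_comm hne, mul_comm (f _)]
    · rw [siteOp_of_not_mem hk]; exact Commute.one_right _
  · rw [siteOp_of_not_mem hj]; exact Commute.one_left _

lemma siteOp_neg {L k : ℕ} (h1 : 1 ≤ k) (h2 : k ≤ L) (s : Bool) (f : Fin 2 → ℂ) :
    siteOp L k s (-f) = -siteOp L k s f := by
  ext b c
  simp only [siteOp, dif_pos (And.intro h1 h2), Matrix.of_apply, Matrix.neg_apply, Pi.neg_apply]
  split_ifs <;> simp

lemma siteOp_smul {L k : ℕ} (h1 : 1 ≤ k) (h2 : k ≤ L) (s : Bool) (z : ℂ)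
    (f : Fin 2 → ℂ) :
    siteOp L k s (z • f) = z • siteOp L k s f := by
  ext b c
  simp only [siteOp, dif_pos (And.intro h1 h2), Matrix.of_apply, Matrix.smul_apply,
    Pi.smul_apply]
  split_ifs <;> simp

lemma siteOp_false_one (L k : ℕ) : siteOp L k false 1 = 1 := by
  by_cases h : 1 ≤ k ∧ k ≤ L
  · ext b c
    simp [siteOp, dif_pos h, Matrix.one_apply, eq_comm]
  · exact siteOp_of_not_mem h _ _

lemma siteX_eq_siteOp (L k : ℕ) : siteX L k = siteOp L k true 1 :=
  rfl

lemma siteY_eq_siteOp (L k : ℕ) :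
    siteY L k = siteOp L k true (fun x => -Complex.I * bitSign x) :=
  rfl

lemma siteZ_eq_siteOp (L k : ℕ) : siteZ L k = siteOp L k false bitSign := by
  by_cases h : 1 ≤ k ∧ k ≤ L
  · ext b c
    simp [siteZ, siteOp, dif_pos h, Matrix.diagonal_apply, eq_comm]
  · rw [siteZ, dif_neg h, siteOp_of_not_mem h]

lemma siteX_mul_self (L k : ℕ) : siteX L k * siteX L k = 1 := by
  rw [siteX_eq_siteOp, siteOp_mul_siteOp, ← siteOp_false_one L k]
  congr 1; funext x; simp

lemma siteY_mul_self (L k : ℕ) : siteY L k * siteY L k = 1 := by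
  rw [siteY_eq_siteOp, siteOp_mul_siteOp, ← siteOp_false_one L k]
  congr 1; funext x; fin_cases x <;> simp [bitSign]

lemma siteZ_mul_self (L k : ℕ) : siteZ L k * siteZ L k = 1 := by
  rw [siteZ_eq_siteOp, siteOp_mul_siteOp, ← siteOp_false_one L k]
  congr 1; funext x; fin_cases x <;> simp [bitSign]

lemma siteX_mul_siteY {L k : ℕ} (h1 : 1 ≤ k) (h2 : k ≤ L) :
    siteX L k * siteY L k = Complex.I • siteZ L k := by
  rw [siteX_eq_siteOp, siteY_eq_siteOp, siteZ_eq_siteOp, siteOp_mul_siteOp, ← siteOp_smul h1 h2]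
  congr 1; funext x; fin_cases x <;> simp [bitSign]

lemma siteY_mul_siteX {L k : ℕ} (h1 : 1 ≤ k) (h2 : k ≤ L) :
    siteY L k * siteX L k = -(Complex.I • siteZ L k) := by
  rw [siteX_eq_siteOp, siteY_eq_siteOp, siteZ_eq_siteOp, siteOp_mul_siteOp,
    ← siteOp_smul h1 h2, ← siteOp_neg h1 h2]
  congr 1; funext x; fin_cases x <;> simp [bitSign]

lemma siteZ_mul_siteOp_flip {L k : ℕ} (h1 : 1 ≤ k) (h2 : k ≤ L) (f : Fin 2 → ℂ) :
    siteZ L k * siteOp L k true f = -(siteOp L k true f * siteZ L k) := by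
  rw [siteZ_eq_siteOp, siteOp_mul_siteOp, siteOp_mul_siteOp, ← siteOp_neg h1 h2]
  congr 1; funext x; simp [bitSign_one_sub, mul_comm]

lemma commute_siteZ_siteOp {L i k : ℕ} (h : i ≠ k) (s : Bool) (f : Fin 2 → ℂ) :
    Commute (siteZ L i) (siteOp L k s f) := by
  rw [siteZ_eq_siteOp]; exact commute_siteOp h _ _ _ _

lemma commute_siteZ (L i k : ℕ) : Commute (siteZ L i) (siteZ L k) := by
  rcases eq_or_ne i k with rfl | h
  · exact Commute.refl _
  · rw [siteZ_eq_siteOp L k]; exact commute_siteZ_siteOp h _ _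

lemma opProd_succ (L : ℕ) (f : ℕ → QOp L) (n : ℕ) :
    opProd L f (n + 1) = opProd L f n * f (n + 1) := by
  simp [opProd, List.range_succ]

-- `zString` in lemma names is the Jordan–Wigner string `opProd L (siteZ L) n = Z_1 ⋯ Z_n`.
lemma commute_zString {L n : ℕ} {T : QOp L}
    (hT : ∀ i, 1 ≤ i → i ≤ n → Commute (siteZ L i) T) :
    Commute (opProd L (siteZ L) n) T := by
  induction n with
  | zero => exact Commute.one_left T
  | succ n ih =>
    rw [opProd_succ]
    exact (ih fun i h1 h2 => hT i h1 (by omega)).mul_left (hT _ (by omega) le_rfl)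

lemma zString_mul_self (L n : ℕ) : opProd L (siteZ L) n * opProd L (siteZ L) n = 1 := by
  induction n with
  | zero => exact one_mul 1
  | succ n ih =>
    rw [opProd_succ, (commute_zString fun i _ _ => commute_siteZ L i (n + 1)).symm.mul_mul_mul_comm,
      ih, siteZ_mul_self, one_mul]

lemma zString_mul_siteOp_flip {L n a : ℕ} (ha1 : 1 ≤ a) (ha : a ≤ n) (hn : n ≤ L)
    (f : Fin 2 → ℂ) :
    opProd L (siteZ L) n * siteOp L a true f = -(siteOp L a true f * opProd L (siteZ L) n) := by
  induction n with
  | zero => omega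
  | succ n ih =>
    rw [opProd_succ]
    rcases eq_or_lt_of_le ha with rfl | ha
    · have hcomm : Commute (opProd L (siteZ L) n) (siteOp L (n + 1) true f) :=
        commute_zString fun i _ hi => commute_siteZ_siteOp (by omega) _ _
      rw [mul_assoc, siteZ_mul_siteOp_flip ha1 hn, mul_neg, ← mul_assoc, hcomm.eq, mul_assoc]
    · rw [mul_assoc, (commute_siteZ_siteOp (by omega) _ _).eq, ← mul_assoc,
        ih (by omega) (by omega), neg_mul, mul_assoc]

lemma majorana_eq_zString_mul_siteOp (L m : ℕ) :
    ∃ f, majorana L m = opProd L (siteZ L) ((m + 1) / 2 - 1) * siteOp L ((m + 1) / 2) true f := by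
  unfold majorana
  split_ifs
  exacts [⟨_, by rw [siteX_eq_siteOp]⟩, ⟨_, by rw [siteY_eq_siteOp]⟩]

lemma majorana_mul_self (L m : ℕ) : majorana L m * majorana L m = 1 := by
  have hcomm : ∀ f,
      Commute (siteOp L ((m + 1) / 2) true f) (opProd L (siteZ L) ((m + 1) / 2 - 1)) := fun f =>
    (commute_zString fun i _ _ => commute_siteZ_siteOp (by omega) _ _).symm
  unfold majorana
  split_ifs
  · rw [siteX_eq_siteOp, (hcomm _).mul_mul_mul_comm, zString_mul_self, ← siteX_eq_siteOp,
      siteX_mul_self, one_mul]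
  · rw [siteY_eq_siteOp, (hcomm _).mul_mul_mul_comm, zString_mul_self, ← siteY_eq_siteOp,
      siteY_mul_self, one_mul]

lemma majorana_two_mul_sub_one (L a : ℕ) (ha : 1 ≤ a) :
    majorana L (2 * a - 1) = opProd L (siteZ L) (a - 1) * siteX L a := by
  rw [majorana, show (2 * a - 1 + 1) / 2 = a by omega, if_pos (by omega)]

lemma majorana_two_mul (L a : ℕ) :
    majorana L (2 * a) = opProd L (siteZ L) (a - 1) * siteY L a := by
  rw [majorana, show (2 * a + 1) / 2 = a by omega, if_neg (by omega)]

lemma majorana_pair {L a : ℕ} (h1 : 1 ≤ a) (h2 : a ≤ L) :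
    majorana L (2 * a - 1) * majorana L (2 * a) = Complex.I • siteZ L a := by
  have hcomm : Commute (siteX L a) (opProd L (siteZ L) (a - 1)) := by
    rw [siteX_eq_siteOp]
    exact (commute_zString fun i _ _ => commute_siteZ_siteOp (by omega) _ _).symm
  rw [majorana_two_mul_sub_one L a h1, majorana_two_mul, hcomm.mul_mul_mul_comm,
    zString_mul_self, one_mul, siteX_mul_siteY h1 h2]

lemma majorana_pair_swap {L a : ℕ} (h1 : 1 ≤ a) (h2 : a ≤ L) :
    majorana L (2 * a) * majorana L (2 * a - 1) = -(Complex.I • siteZ L a) := by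
  have hcomm : Commute (siteY L a) (opProd L (siteZ L) (a - 1)) := by
    rw [siteY_eq_siteOp]
    exact (commute_zString fun i _ _ => commute_siteZ_siteOp (by omega) _ _).symm
  rw [majorana_two_mul_sub_one L a h1, majorana_two_mul, hcomm.mul_mul_mul_comm,
    zString_mul_self, one_mul, siteY_mul_siteX h1 h2]

lemma majorana_anticomm_of_lt {L m n : ℕ} (hm : 1 ≤ m) (hmn : m < n) (hn : n ≤ 2 * L) :
    majorana L m * majorana L n = -(majorana L n * majorana L m) := by
  rcases eq_or_lt_of_le (Nat.div_le_div_right (c := 2) (by omega : m + 1 ≤ n + 1)) with hab | hab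
  · obtain ⟨a, rfl, rfl⟩ : ∃ a, m = 2 * a - 1 ∧ n = 2 * a :=
      ⟨(n + 1) / 2, by omega, by omega⟩
    rw [majorana_pair (by omega) (by omega), majorana_pair_swap (by omega) (by omega), neg_neg]
  obtain ⟨f, hf⟩ := majorana_eq_zString_mul_siteOp L m
  obtain ⟨g, hg⟩ := majorana_eq_zString_mul_siteOp L n
  set a := (m + 1) / 2
  set b := (n + 1) / 2
  set Za := opProd L (siteZ L) (a - 1)
  set Zb := opProd L (siteZ L) (b - 1)
  have hFZb : siteOp L a true f * Zb = -(Zb * siteOp L a true f) := by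
    rw [zString_mul_siteOp_flip (by omega) (by omega) (by omega), neg_neg]
  have hZaG : Commute Za (siteOp L b true g) :=
    commute_zString fun i _ _ => commute_siteZ_siteOp (by omega) _ _
  have hZaZb : Commute Za Zb := commute_zString fun i _ _ =>
    (commute_zString fun j _ _ => commute_siteZ L j i).symm
  have hFG : Commute (siteOp L a true f) (siteOp L b true g) := commute_siteOp (by omega) _ _ _ _
  rw [hf, hg]
  calc Za * siteOp L a true f * (Zb * siteOp L b true g)
      = -(Za * Zb * (siteOp L a true f * siteOp L b true g)) := by
        rw [mul_assoc Za, ← mul_assoc _ Zb, hFZb]; simp only [mul_neg, neg_mul, mul_assoc]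
    _ = -(Zb * siteOp L b true g * (Za * siteOp L a true f)) := by
        rw [hFG.eq, hZaZb.eq, mul_assoc Zb Za, ← mul_assoc Za, hZaG.eq]; simp only [mul_assoc]

lemma majorana_anticomm {L m n : ℕ} (hm : 1 ≤ m) (hm' : m ≤ 2 * L) (hn : 1 ≤ n)
    (hn' : n ≤ 2 * L) (hmn : m ≠ n) :
    majorana L m * majorana L n = -(majorana L n * majorana L m) := by
  rcases lt_or_gt_of_ne hmn with h | h
  · exact majorana_anticomm_of_lt hm h hn'
  · rw [majorana_anticomm_of_lt hn h hm', neg_neg]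

lemma prod_majorana_range' {L n : ℕ} (hn : n ≤ L) :
    ((List.range' 1 (2 * n)).map (majorana L)).prod = Complex.I ^ n • opProd L (siteZ L) n := by
  induction n with
  | zero => simp [opProd]
  | succ n ih =>
    rw [show 2 * (n + 1) = 2 * n + 1 + 1 by ring, List.range'_concat, List.range'_concat,
      List.map_append, List.map_append, List.prod_append, List.prod_append, ih (by omega)]
    simp only [List.map_cons, List.map_nil, List.prod_cons, List.prod_nil, mul_one]
    rw [show 1 + 1 * (2 * n) = 2 * (n + 1) - 1 by omega,
      show 1 + 1 * (2 * n + 1) = 2 * (n + 1) by omega, mul_assoc, majorana_pair (by omega) hn,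
      smul_mul_smul_comm, ← opProd_succ, pow_succ]

namespace IsMatching

variable {L : ℕ} {M : Finset (ℕ × ℕ)} (hM : IsMatching L M)
include hM

lemma isPartialMatching : IsPartialMatching M where
  fst_lt_snd pr hpr := (hM.1 pr hpr).1
  pairwiseDisjoint pr hpr pr' hpr' hne := Finset.disjoint_left.mpr fun e he he' => hne <| by
    have := hM.1 pr hpr
    simp only [pairSet, Finset.mem_insert, Finset.mem_singleton] at he he'
    obtain ⟨w, -, hu⟩ := hM.2 e (by omega) (by omega)
    rw [hu pr ⟨hpr, by omega⟩, hu pr' ⟨hpr', by omega⟩]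

lemma endpoints_eq : endpoints M = Finset.Icc 1 (2 * L) := by
  ext m
  rw [mem_endpoints, Finset.mem_Icc]
  constructor
  · rintro ⟨pr, hpr, h⟩
    have := hM.1 pr hpr
    omega
  · rintro ⟨h1, h2⟩
    obtain ⟨pr, ⟨hpr, h⟩, -⟩ := hM.2 m h1 h2
    exact ⟨pr, hpr, h⟩

lemma card_eq : M.card = L := by
  have := hM.isPartialMatching.card_endpoints
  rw [hM.endpoints_eq, Nat.card_Icc] at this
  omega

end IsMatching

theorem dimer_state_total_parity_general (L : ℕ) (M : Finset (ℕ × ℕ)) (hM : IsMatching L M)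
    (p : ℕ × ℕ → ℂ) (hp : ∀ pr ∈ M, p pr = 1 ∨ p pr = -1)
    (ψ : QVec L)
    (hψ : ∀ pr ∈ M, (majorana L pr.1 + (Complex.I * p pr) • majorana L pr.2) *ᵥ ψ = 0) :
    totalParity L *ᵥ ψ = (((-1 : ℂ)) ^ crossings M * ∏ pr ∈ M, p pr) • ψ := by
  have hrange : ∀ m ∈ endpoints M, 1 ≤ m ∧ m ≤ 2 * L := fun m hm =>
    Finset.mem_Icc.mp (hM.endpoints_eq ▸ hm)
  have hpair : ∀ pr ∈ M, (majorana L pr.1 * majorana L pr.2) *ᵥ ψ = (I * p pr) • ψ :=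
    fun pr hpr => Matrix.mul_mulVec_eq_smul_of_add_smul_mulVec_eq_zero (majorana_mul_self L _)
      (by rcases hp pr hpr with h | h <;> simp [h]) (hψ pr hpr)
  have h := list_prod_mulVec_eq_neg_one_pow_crossings_smul (majorana L) (fun pr => I * p pr) ψ
    hM.isPartialMatching (fun m hm n hn hmn => majorana_anticomm (hrange m hm).1 (hrange m hm).2
      (hrange n hn).1 (hrange n hn).2 hmn) hpair (List.pairwise_lt_range' 1)
    (by rw [List.toFinset_range'_1_1, hM.endpoints_eq])
  rw [prod_majorana_range' le_rfl, Matrix.smul_mulVec, Finset.prod_mul_distrib, Finset.prod_const,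
    hM.card_eq] at h
  apply smul_right_injective _ (pow_ne_zero L I_ne_zero)
  simp only [totalParity, h, smul_smul]
  congr 1
  ring

/-- a nonzero joint solution of the dimer conditions of a matching `M`
with parities `p` is an eigenvector of the total parity operator with eigenvalue
`(-1)^{N_c(M)} ∏_{(j,k) ∈ M} p_{j,k}`. -/
theorem dimer_state_total_parity (L : ℕ) (M : Finset (ℕ × ℕ)) (hM : IsMatching L M)
    (p : ℕ × ℕ → ℂ) (hp : ∀ pr ∈ M, p pr = 1 ∨ p pr = -1)
    (ψ : QVec L) (hne : ψ ≠ 0)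
    (hψ : ∀ pr ∈ M, (majorana L pr.1 + (Complex.I * p pr) • majorana L pr.2) *ᵥ ψ = 0) :
    totalParity L *ᵥ ψ = (((-1 : ℂ)) ^ crossings M * ∏ pr ∈ M, p pr) • ψ :=
  dimer_state_total_parity_general L M hM p hp ψ hψ

end
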